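/- arXiv:2509.01159 — 2 statements merged into one kernel-verified Lean document; each statement's English description precedes it below -/
import Mathlib

section
/- Let G(x) = A_0 + x_1 A_1 + ... + x_n A_n with A_0,...,A_n q×q symmetric real matrices, K = {x ∈ ℝ^n : G(x) ⪰ 0}, and let H(G) ⊆ ℝ[x_1,...,x_n] be the set of all polynomials of the form λ_0 + Σ_{k=1}^m ⟨Λ_k, G(x)^{⊗k}⟩ where m ∈ ℕ, λ_0 ≥ 0 is a real number, and each Λ_k is a q^k × q^k positive semidefinite real matrix. If K is compact with nonempty interior, then every polynomial h ∈ ℝ[x_1,...,x_n] can be written as h = h_1 − h_2 with h_1, h_2 ∈ H(G); that is, ℝ[x_1,...,x_n] = H(G) − H(G). -/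
/-!
`H(G) − H(G)` is the linear span of the convex cone `H(G)`. Every entry `(G^{⊗k})_{ab}` lies in
this span: since `G` is symmetric it equals `⟨Λ, G^{⊗k}⟩` for `Λ = (E_ab + E_ba)/2`, and `Λ` is the
difference of its positive and negative parts, both PSD. These entries are exactly the monomials
in the entries of `G`, so the span contains the algebra generated by the entries of `G`.
If `∑ d_l A_l = 0` for some `d ≠ 0`, then `K` is invariant under translation by `d`, which is
impossible for a nonempty compact `K`. Hence `x ↦ ∑ x_l A_l` is injective, every coordinate
functional factors through it, and each variable `x_m` is a linear combination of the linear
parts `G_ij − (A₀)_ij`, so the entries of `G` generate all polynomials.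
-/

open scoped BigOperators

noncomputable section

/-- The `k`-fold Kronecker power of a matrix, with rows and columns indexed by
functions `Fin k → ι` (a type of cardinality `(#ι)^k`):
`(M^{⊗k})_{a,b} = ∏ᵢ M_{a i, b i}`. -/
def kronPow {ι : Type*} {R : Type*} [CommMonoid R] (M : Matrix ι ι R) (k : ℕ) :
    Matrix (Fin k → ι) (Fin k → ι) R :=
  Matrix.of fun a b => ∏ i, M (a i) (b i)

/-- Trace inner product `⟨Λ, B⟩ = tr(Λᵀ B) = ∑ᵢⱼ Λᵢⱼ Bᵢⱼ` of a real matrix against a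
polynomial matrix. -/
def tipP {n : ℕ} {ι : Type*} [Fintype ι] (Λ : Matrix ι ι ℝ)
    (B : Matrix ι ι (MvPolynomial (Fin n) ℝ)) : MvPolynomial (Fin n) ℝ :=
  ∑ i, ∑ j, MvPolynomial.C (Λ i j) * B i j

/-- The cone `H(G)` of all polynomials of the form
`λ₀ + ∑_{k=1}^m ⟨Λ_k, G(x)^{⊗k}⟩` with `λ₀ ≥ 0` and each `Λ_k` positive semidefinite. -/
def Hset {n : ℕ} {ι : Type*} [Fintype ι]
    (G : Matrix ι ι (MvPolynomial (Fin n) ℝ)) : Set (MvPolynomial (Fin n) ℝ) :=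
  { p | ∃ (m : ℕ) (lam0 : ℝ) (Λ : (k : ℕ) → Matrix (Fin k → ι) (Fin k → ι) ℝ),
      0 ≤ lam0 ∧ (∀ k ∈ Finset.Icc 1 m, (Λ k).PosSemidef) ∧
      p = MvPolynomial.C lam0 + ∑ k ∈ Finset.Icc 1 m, tipP (Λ k) (kronPow G k) }

/-- The linear polynomial matrix `G(x) = A₀ + ∑ₗ xₗ Aₗ`. -/
def linMat {n q : ℕ} (A0 : Matrix (Fin q) (Fin q) ℝ)
    (A : Fin n → Matrix (Fin q) (Fin q) ℝ) :
    Matrix (Fin q) (Fin q) (MvPolynomial (Fin n) ℝ) :=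
  Matrix.of fun i j =>
    MvPolynomial.C (A0 i j) + ∑ l, MvPolynomial.X l * MvPolynomial.C (A l i j)

/-- Entrywise evaluation of a polynomial matrix at a point `x`. -/
def evalMat {n : ℕ} {ι : Type*} (x : Fin n → ℝ)
    (B : Matrix ι ι (MvPolynomial (Fin n) ℝ)) : Matrix ι ι ℝ :=
  Matrix.of fun i j => MvPolynomial.eval x (B i j)

open MvPolynomial
open scoped Matrix

lemma PointedCone.mem_span_iff_exists_sub {𝕜 E : Type*} [Ring 𝕜] [LinearOrder 𝕜]
    [IsOrderedRing 𝕜] [AddCommGroup E] [Module 𝕜 E] (C : PointedCone 𝕜 E) {x : E} :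
    x ∈ Submodule.span 𝕜 (C : Set E) ↔ ∃ a ∈ C, ∃ b ∈ C, x = a - b := by
  refine ⟨fun hx => ?_, ?_⟩
  · induction hx using Submodule.span_induction with
    | mem x hx => exact ⟨x, hx, 0, C.zero_mem, (sub_zero x).symm⟩
    | zero => exact ⟨0, C.zero_mem, 0, C.zero_mem, (sub_zero 0).symm⟩
    | add x y _ _ hx hy =>
      obtain ⟨a, ha, b, hb, rfl⟩ := hx
      obtain ⟨a', ha', b', hb', rfl⟩ := hy
      exact ⟨a + a', C.add_mem ha ha', b + b', C.add_mem hb hb', by abel⟩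
    | smul r x _ hx =>
      obtain ⟨a, ha, b, hb, rfl⟩ := hx
      rcases le_or_gt 0 r with hr | hr
      · exact ⟨r • a, C.smul_mem hr ha, r • b, C.smul_mem hr hb, smul_sub r a b⟩
      · exact ⟨(-r) • b, C.smul_mem (neg_nonneg.2 hr.le) hb,
          (-r) • a, C.smul_mem (neg_nonneg.2 hr.le) ha,
          by rw [neg_smul, neg_smul, neg_sub_neg, smul_sub]⟩
  · rintro ⟨a, ha, b, hb, rfl⟩
    exact Submodule.sub_mem _ (Submodule.subset_span ha) (Submodule.subset_span hb)

lemma eq_zero_of_isBounded_of_add_smul_mem {E : Type*} [NormedAddCommGroup E]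
    [NormedSpace ℝ E] {S : Set E} (hS : Bornology.IsBounded S) {x d : E}
    (h : ∀ t : ℝ, x + t • d ∈ S) : d = 0 := by
  obtain ⟨R, hR⟩ := hS.exists_norm_le
  by_contra hd
  have hd : 0 < ‖d‖ := norm_pos_iff.2 hd
  have hx : ‖x‖ ≤ R := by simpa using hR _ (h 0)
  have ht : ‖((R + ‖x‖ + 1) / ‖d‖) • d‖ = R + ‖x‖ + 1 := by
    rw [norm_smul, Real.norm_eq_abs, abs_div, abs_norm,
      abs_of_pos (by linarith [norm_nonneg x]), div_mul_cancel₀ _ hd.ne']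
  have := norm_sub_le (x + ((R + ‖x‖ + 1) / ‖d‖) • d) x
  rw [add_sub_cancel_left] at this
  linarith [hR _ (h ((R + ‖x‖ + 1) / ‖d‖))]

lemma LinearMap.ker_eq_bot_of_isBounded_preimage {E F : Type*} [NormedAddCommGroup E]
    [NormedSpace ℝ E] [AddCommGroup F] [Module ℝ F] (L : E →ₗ[ℝ] F) (c : F) (T : Set F)
    (hb : Bornology.IsBounded ((fun x => c + L x) ⁻¹' T))
    (hne : ((fun x => c + L x) ⁻¹' T).Nonempty) : LinearMap.ker L = ⊥ := by
  obtain ⟨x, hx⟩ := hne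
  refine (Submodule.eq_bot_iff _).2 fun d hd =>
    eq_zero_of_isBounded_of_add_smul_mem (x := x) hb fun t => ?_
  simpa [Set.mem_preimage, map_add, map_smul, LinearMap.mem_ker.1 hd] using hx

section Hset

variable {n : ℕ} {ι : Type*} [Fintype ι]

lemma tipP_zero (B : Matrix ι ι (MvPolynomial (Fin n) ℝ)) : tipP 0 B = 0 := by
  simp [tipP]

lemma tipP_add (Λ Λ' : Matrix ι ι ℝ) (B : Matrix ι ι (MvPolynomial (Fin n) ℝ)) :
    tipP (Λ + Λ') B = tipP Λ B + tipP Λ' B := by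
  simp [tipP, add_mul, Finset.sum_add_distrib]

lemma tipP_sub (Λ Λ' : Matrix ι ι ℝ) (B : Matrix ι ι (MvPolynomial (Fin n) ℝ)) :
    tipP (Λ - Λ') B = tipP Λ B - tipP Λ' B := by
  simp [tipP, sub_mul, Finset.sum_sub_distrib]

lemma tipP_smul (r : ℝ) (Λ : Matrix ι ι ℝ) (B : Matrix ι ι (MvPolynomial (Fin n) ℝ)) :
    tipP (r • Λ) B = r • tipP Λ B := by
  simp [tipP, smul_eq_C_mul, Finset.mul_sum, mul_assoc]

lemma tipP_single [DecidableEq ι] (a b : ι) (r : ℝ)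
    (B : Matrix ι ι (MvPolynomial (Fin n) ℝ)) :
    tipP (Matrix.single a b r) B = C r * B a b := by
  simp [tipP, Matrix.single_apply, apply_ite C, ite_mul, ite_and, Finset.sum_ite_eq]

lemma C_mem_Hset (G : Matrix ι ι (MvPolynomial (Fin n) ℝ)) {a : ℝ} (ha : 0 ≤ a) :
    C a ∈ Hset G :=
  ⟨0, a, fun _ => 0, ha, by simp, by simp⟩

lemma tipP_kronPow_mem_Hset (G : Matrix ι ι (MvPolynomial (Fin n) ℝ)) {k : ℕ} (hk : 1 ≤ k)
    {P : Matrix (Fin k → ι) (Fin k → ι) ℝ} (hP : P.PosSemidef) :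
    tipP P (kronPow G k) ∈ Hset G := by
  refine ⟨k, 0, Pi.single k P, le_rfl, fun j _ => ?_, ?_⟩
  · rcases eq_or_ne j k with rfl | hj
    · simpa using hP
    · simpa [Pi.single_eq_of_ne hj] using Matrix.PosSemidef.zero
  · rw [Finset.sum_eq_single_of_mem k (Finset.mem_Icc.2 ⟨hk, le_rfl⟩)]
    · simp
    · intro j _ hj
      rw [Pi.single_eq_of_ne hj, tipP_zero]

lemma exists_repr_of_mem_Hset {G : Matrix ι ι (MvPolynomial (Fin n) ℝ)}
    {p : MvPolynomial (Fin n) ℝ} (hp : p ∈ Hset G) :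
    ∃ m, ∀ M, m ≤ M → ∃ (lam0 : ℝ) (Λ : (k : ℕ) → Matrix (Fin k → ι) (Fin k → ι) ℝ),
      0 ≤ lam0 ∧ (∀ k, (Λ k).PosSemidef) ∧
      p = C lam0 + ∑ k ∈ Finset.Icc 1 M, tipP (Λ k) (kronPow G k) := by
  classical
  obtain ⟨m, lam0, Λ, hlam0, hΛ, rfl⟩ := hp
  refine ⟨m, fun M hM => ⟨lam0, fun k => if k ∈ Finset.Icc 1 m then Λ k else 0, hlam0,
    fun k => ?_, ?_⟩⟩
  · dsimp only
    split_ifs with hk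
    exacts [hΛ k hk, Matrix.PosSemidef.zero]
  · have hpad : ∀ k, tipP (if k ∈ Finset.Icc 1 m then Λ k else 0) (kronPow G k) =
        if k ∈ Finset.Icc 1 m then tipP (Λ k) (kronPow G k) else 0 := fun k => by
      split_ifs <;> simp [tipP_zero]
    rw [Finset.sum_congr rfl fun k _ => hpad k, Finset.sum_ite_mem,
      Finset.inter_eq_right.2 (Finset.Icc_subset_Icc_right hM)]

lemma add_mem_Hset {G : Matrix ι ι (MvPolynomial (Fin n) ℝ)} {p p' : MvPolynomial (Fin n) ℝ}
    (hp : p ∈ Hset G) (hp' : p' ∈ Hset G) : p + p' ∈ Hset G := by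
  obtain ⟨m, hm⟩ := exists_repr_of_mem_Hset hp
  obtain ⟨m', hm'⟩ := exists_repr_of_mem_Hset hp'
  obtain ⟨lam0, Λ, hlam0, hΛ, rfl⟩ := hm (max m m') (le_max_left _ _)
  obtain ⟨lam0', Λ', hlam0', hΛ', rfl⟩ := hm' (max m m') (le_max_right _ _)
  refine ⟨max m m', lam0 + lam0', fun k => Λ k + Λ' k, add_nonneg hlam0 hlam0',
    fun k _ => (hΛ k).add (hΛ' k), ?_⟩
  simp only [tipP_add, Finset.sum_add_distrib, map_add]
  abel

lemma smul_mem_Hset {G : Matrix ι ι (MvPolynomial (Fin n) ℝ)} {p : MvPolynomial (Fin n) ℝ}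
    {r : ℝ} (hr : 0 ≤ r) (hp : p ∈ Hset G) : r • p ∈ Hset G := by
  obtain ⟨m, lam0, Λ, hlam0, hΛ, rfl⟩ := hp
  refine ⟨m, r * lam0, fun k => r • Λ k, mul_nonneg hr hlam0,
    fun k hk => (hΛ k hk).smul hr, ?_⟩
  simp only [tipP_smul, smul_add, Finset.smul_sum, map_mul, smul_eq_C_mul]

def HsetCone (G : Matrix ι ι (MvPolynomial (Fin n) ℝ)) :
    PointedCone ℝ (MvPolynomial (Fin n) ℝ) where
  carrier := Hset G
  zero_mem' := by simpa using C_mem_Hset G le_rfl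
  add_mem' := add_mem_Hset
  smul_mem' r _ hp := smul_mem_Hset r.2 hp

open scoped MatrixOrder in
lemma tipP_kronPow_mem_span_Hset (G : Matrix ι ι (MvPolynomial (Fin n) ℝ)) {k : ℕ}
    (hk : 1 ≤ k) {Λ : Matrix (Fin k → ι) (Fin k → ι) ℝ} (hΛ : Λ.IsHermitian) :
    tipP Λ (kronPow G k) ∈ Submodule.span ℝ (Hset G) := by
  classical
  rw [← CFC.posPart_sub_negPart Λ hΛ, tipP_sub]
  exact Submodule.sub_mem _
    (Submodule.subset_span (tipP_kronPow_mem_Hset G hk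
      (Matrix.nonneg_iff_posSemidef.1 (CFC.posPart_nonneg Λ))))
    (Submodule.subset_span (tipP_kronPow_mem_Hset G hk
      (Matrix.nonneg_iff_posSemidef.1 (CFC.negPart_nonneg Λ))))

end Hset

section kronPow

variable {ι R : Type*} [CommMonoid R]

lemma kronPow_append (M : Matrix ι ι R) {k k' : ℕ} (a b : Fin k → ι) (a' b' : Fin k' → ι) :
    kronPow M (k + k') (Fin.append a a') (Fin.append b b') =
      kronPow M k a b * kronPow M k' a' b' := by
  simp [kronPow, Fin.prod_univ_add]

lemma Matrix.IsSymm.kronPow {M : Matrix ι ι R} (hM : M.IsSymm) (k : ℕ) :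
    (kronPow M k).IsSymm := by
  ext a b
  simp [_root_.kronPow, hM.apply]

def kronPowEntries (M : Matrix ι ι R) : Submonoid R where
  carrier := {p | ∃ (k : ℕ) (a b : Fin k → ι), kronPow M k a b = p}
  one_mem' := ⟨0, Fin.elim0, Fin.elim0, by simp [kronPow]⟩
  mul_mem' := by
    rintro _ _ ⟨k, a, b, rfl⟩ ⟨k', a', b', rfl⟩
    exact ⟨k + k', _, _, kronPow_append M a b a' b'⟩

lemma closure_entries_le_kronPowEntries (M : Matrix ι ι R) :
    Submonoid.closure (Set.range (Function.uncurry M)) ≤ kronPowEntries M :=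
  Submonoid.closure_le.2 <| by
    rintro _ ⟨⟨i, j⟩, rfl⟩
    exact ⟨1, fun _ => i, fun _ => j, by simp [kronPow]; rfl⟩

end kronPow

section Entries

variable {n : ℕ} {ι : Type*} [Fintype ι] [DecidableEq ι]
  {G : Matrix ι ι (MvPolynomial (Fin n) ℝ)}

lemma kronPow_apply_mem_span_Hset (hG : G.IsSymm) (k : ℕ) (a b : Fin k → ι) :
    kronPow G k a b ∈ Submodule.span ℝ (Hset G) := by
  rcases Nat.eq_zero_or_pos k with rfl | hk
  · simpa [kronPow] using Submodule.subset_span (C_mem_Hset G zero_le_one)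
  · set S := Matrix.single a b (1 / 2 : ℝ)
    have hS : tipP (S + Sᴴ) (kronPow G k) = kronPow G k a b := by
      rw [Matrix.conjTranspose_single, tipP_add, tipP_single, tipP_single,
        (hG.kronPow k).apply, ← add_mul, ← map_add]
      norm_num
    exact hS ▸ tipP_kronPow_mem_span_Hset G hk (Matrix.isHermitian_add_transpose_self S)

lemma adjoin_entries_le_span_Hset (hG : G.IsSymm) :
    Subalgebra.toSubmodule (Algebra.adjoin ℝ (Set.range (Function.uncurry G))) ≤
      Submodule.span ℝ (Hset G) := by
  rw [Algebra.adjoin_eq_span, Submodule.span_le]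
  intro p hp
  obtain ⟨k, a, b, rfl⟩ := closure_entries_le_kronPowEntries G hp
  exact kronPow_apply_mem_span_Hset hG k a b

end Entries

section linMat

variable {n q : ℕ} {A0 : Matrix (Fin q) (Fin q) ℝ} {A : Fin n → Matrix (Fin q) (Fin q) ℝ}

lemma linMat_isSymm (hA0 : A0.IsSymm) (hA : ∀ l, (A l).IsSymm) : (linMat A0 A).IsSymm := by
  ext i j
  simp [linMat, hA0.apply, (hA _).apply]

lemma evalMat_linMat (x : Fin n → ℝ) :
    evalMat x (linMat A0 A) = A0 + Fintype.linearCombination ℝ A x := by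
  ext i j
  simp only [evalMat, linMat, Matrix.of_apply, map_add, map_sum, map_mul, eval_C, eval_X,
    Matrix.add_apply, Fintype.linearCombination_apply, Matrix.sum_apply, Matrix.smul_apply,
    smul_eq_mul]

lemma Matrix.dual_apply_eq_sum_single {m n R : Type*} [Fintype m] [Fintype n] [DecidableEq m]
    [DecidableEq n] [CommSemiring R] (φ : Matrix m n R →ₗ[R] R) (M : Matrix m n R) :
    φ M = ∑ i, ∑ j, M i j * φ (Matrix.single i j 1) := by
  conv_lhs => rw [M.matrix_eq_sum_single]
  simp only [map_sum]
  refine Finset.sum_congr rfl fun i _ => Finset.sum_congr rfl fun j _ => ?_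
  rw [← smul_eq_mul, ← map_smul, Matrix.smul_single, smul_eq_mul, mul_one]

lemma sum_C_mul_X_mem_adjoin_entries (φ : Matrix (Fin q) (Fin q) ℝ →ₗ[ℝ] ℝ) :
    ∑ l, C (φ (A l)) * X l ∈ Algebra.adjoin ℝ (Set.range (Function.uncurry (linMat A0 A))) := by
  have hentry : ∀ i j, ∑ l, C (A l i j) * X l = linMat A0 A i j - C (A0 i j) := fun i j => by
    simp [linMat, mul_comm]
  have hsum : ∑ l, C (φ (A l)) * X l =
      ∑ i, ∑ j, C (φ (Matrix.single i j 1)) * ∑ l, C (A l i j) * X l := by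
    simp only [Matrix.dual_apply_eq_sum_single φ (A _), map_sum, map_mul, Finset.sum_mul,
      Finset.mul_sum]
    rw [Finset.sum_comm]
    refine Finset.sum_congr rfl fun i _ => ?_
    rw [Finset.sum_comm]
    exact Finset.sum_congr rfl fun j _ => Finset.sum_congr rfl fun l _ => by ring
  rw [hsum]
  refine Subalgebra.sum_mem _ fun i _ => Subalgebra.sum_mem _ fun j _ => ?_
  rw [hentry]
  exact Subalgebra.mul_mem _ (Subalgebra.algebraMap_mem _ _) <|
    Subalgebra.sub_mem _ (Algebra.subset_adjoin ⟨(i, j), rfl⟩) (Subalgebra.algebraMap_mem _ _)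

lemma adjoin_entries_linMat_eq_top (hA : LinearMap.ker (Fintype.linearCombination ℝ A) = ⊥) :
    Algebra.adjoin ℝ (Set.range (Function.uncurry (linMat A0 A))) = ⊤ := by
  rw [eq_top_iff, ← MvPolynomial.adjoin_range_X, Algebra.adjoin_le_iff]
  rintro _ ⟨m, rfl⟩
  obtain ⟨φ, hφ⟩ := LinearMap.dualMap_surjective_of_injective (LinearMap.ker_eq_bot.1 hA)
    (LinearMap.proj m)
  have hφA : ∀ l, φ (A l) = (Pi.single l 1 : Fin n → ℝ) m := fun l => by
    simpa using LinearMap.congr_fun hφ (Pi.single l 1)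
  have hX : X m = ∑ l, C (φ (A l)) * X l := by
    simp [hφA, Pi.single_apply]
  exact hX ▸ sum_C_mul_X_mem_adjoin_entries φ

end linMat

/-- If `K = {x : G(x) := A₀ + ∑ xₗ Aₗ ⪰ 0}` is compact with nonempty interior, then every
polynomial is a difference of two elements of `H(G)`, i.e. `ℝ[x] = H(G) − H(G)`. -/
theorem Hset_sub_Hset_eq_all {n q : ℕ}
    (A0 : Matrix (Fin q) (Fin q) ℝ) (A : Fin n → Matrix (Fin q) (Fin q) ℝ)
    (hA0 : A0.IsSymm) (hA : ∀ l, (A l).IsSymm)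
    (K : Set (Fin n → ℝ))
    (hK : K = {x | (evalMat x (linMat A0 A)).PosSemidef})
    (hcomp : IsCompact K)
    (hint : (interior K).Nonempty) :
    ∀ h : MvPolynomial (Fin n) ℝ,
      ∃ h1 ∈ Hset (linMat A0 A), ∃ h2 ∈ Hset (linMat A0 A), h = h1 - h2 := by
  intro h
  have hK' : K = (fun x => A0 + Fintype.linearCombination ℝ A x) ⁻¹' {M | M.PosSemidef} := by
    simp [hK, evalMat_linMat, Set.preimage]
  have hker : LinearMap.ker (Fintype.linearCombination ℝ A) = ⊥ :=
    LinearMap.ker_eq_bot_of_isBounded_preimage _ A0 _ (hK' ▸ hcomp.isBounded)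
      (hK' ▸ hint.mono interior_subset)
  have hspan : h ∈ Submodule.span ℝ (Hset (linMat A0 A)) :=
    adjoin_entries_le_span_Hset (linMat_isSymm hA0 hA)
      (adjoin_entries_linMat_eq_top hker ▸ Algebra.mem_top (R := ℝ))
  exact (HsetCone _).mem_span_iff_exists_sub.1 hspan
end
end

section
/- Let G(x) = diag(G_1(x),...,G_t(x)) be a block-diagonal symmetric polynomial matrix with G_i(x) a q_i × q_i symmetric matrix whose entries are affine (degree ≤ 1) polynomials in ℝ[x_1,...,x_n], and set q = q_1 + ... + q_t. Let H(G) ⊆ ℝ[x_1,...,x_n] be the set of all polynomials of the form λ_0 + Σ_{k=1}^m ⟨Λ_k, G(x)^{⊗k}⟩ where m ∈ ℕ, λ_0 ≥ 0 is real, and each Λ_k is a q^k × q^k positive semidefinite real matrix. For a word w = (w_1,...,w_k) ∈ {1,...,t}^k, let w(G(x)) = G_{w_1}(x) ⊗ G_{w_2}(x) ⊗ ... ⊗ G_{w_k}(x), a square polynomial matrix of size d(w) = q_{w_1}·q_{w_2}···q_{w_k}. Then H(G) equals the set of all polynomials of the form λ_0 + Σ_{w} ⟨Γ_w, w(G(x))⟩,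 the sum running over all words w of length between 1 and m in the letters {1,...,t}, where m ∈ ℕ, λ_0 ≥ 0 is real, and each Γ_w is a d(w) × d(w) positive semidefinite real matrix. -/
open scoped BigOperators

noncomputable section

/-- For a word `w = (w₁,…,w_k)` in the letters `{1,…,t}`, the evaluation
`w(G) = G_{w₁} ⊗ ⋯ ⊗ G_{w_k}`, a square matrix of size `q_{w₁}⋯q_{w_k}` indexed by the
dependent functions `(i : Fin k) → Fin (q (w i))`. -/
def wordMat {n t : ℕ} {q : Fin t → ℕ}
    (G : (i : Fin t) → Matrix (Fin (q i)) (Fin (q i)) (MvPolynomial (Fin n) ℝ))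
    {k : ℕ} (w : Fin k → Fin t) :
    Matrix ((i : Fin k) → Fin (q (w i))) ((i : Fin k) → Fin (q (w i)))
      (MvPolynomial (Fin n) ℝ) :=
  Matrix.of fun a b => ∏ i, G (w i) (a i) (b i)

/-!
Index the rows of `G^{⊗k}` by `k`-tuples of pairs (block, position in the block). Grouping these
tuples by their word of blocks, `G^{⊗k}` is, up to a simultaneous permutation of rows and columns,
the block-diagonal matrix `diag_w w(G)`, because an entry of `G^{⊗k}` vanishes as soon as the row
and column words differ. Hence `⟨Λ, G^{⊗k}⟩ = ∑_w ⟨Λ_w, w(G)⟩` with `Λ_w` the principal block of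
`Λ` indexed by the word `w`, which is positive semidefinite when `Λ` is; conversely the
block-diagonal matrix `diag_w Γ_w` is positive semidefinite.
-/

open Matrix

def Equiv.arrowSigmaEquivSigmaPi (κ : Type*) {α : Type*} (β : α → Type*) :
    (κ → Σ a, β a) ≃ Σ w : κ → α, ∀ i, β (w i) where
  toFun x := ⟨fun i => (x i).1, fun i => (x i).2⟩
  invFun y i := ⟨y.1 i, y.2 i⟩
  left_inv _ := rfl
  right_inv _ := rfl

section BlockDiagonal

variable {ι : Type*} [DecidableEq ι] {m : ι → Type*}

lemma Matrix.blockDiagonal'_submatrix_sigmaMk {R : Type*} [Zero R]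
    (M : ∀ i, Matrix (m i) (m i) R) (i : ι) :
    (blockDiagonal' M).submatrix (Sigma.mk i) (Sigma.mk i) = M i := by
  ext a b
  exact blockDiagonal'_apply_eq M i a b

variable [Fintype ι] [∀ i, Fintype (m i)]

lemma Matrix.dotProduct_blockDiagonal'_mulVec {R : Type*} [NonUnitalNonAssocSemiring R] [Star R]
    (M : ∀ i, Matrix (m i) (m i) R) (x : (Σ i, m i) → R) :
    star x ⬝ᵥ blockDiagonal' M *ᵥ x =
      ∑ i, star (fun a => x ⟨i, a⟩) ⬝ᵥ M i *ᵥ fun a => x ⟨i, a⟩ := by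
  simp only [dotProduct, mulVec, Fintype.sum_sigma, Pi.star_apply]
  refine Fintype.sum_congr _ _ fun i => Fintype.sum_congr _ _ fun a => congrArg _ ?_
  rw [Fintype.sum_eq_single i fun j hj => ?_]
  · simp only [blockDiagonal'_apply_eq]
  · simp only [blockDiagonal'_apply_ne M _ _ hj.symm, zero_mul, Finset.sum_const_zero]

lemma Matrix.PosSemidef.blockDiagonal' {R : Type*} [Ring R] [PartialOrder R] [StarRing R]
    [AddLeftMono R] {M : ∀ i, Matrix (m i) (m i) R} (hM : ∀ i, (M i).PosSemidef) :
    (blockDiagonal' M).PosSemidef := by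
  refine .of_dotProduct_mulVec_nonneg
    (isHermitian_blockDiagonal'_iff.mpr fun i => (hM i).isHermitian) fun x => ?_
  rw [dotProduct_blockDiagonal'_mulVec]
  exact Finset.sum_nonneg fun i _ => (hM i).dotProduct_mulVec_nonneg _

end BlockDiagonal

section TraceInnerProduct

variable {n : ℕ}

lemma tipP_submatrix_equiv {κ ι : Type*} [Fintype κ] [Fintype ι] (Λ : Matrix ι ι ℝ)
    (B : Matrix ι ι (MvPolynomial (Fin n) ℝ)) (e : κ ≃ ι) :
    tipP (Λ.submatrix e e) (B.submatrix e e) = tipP Λ B :=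
  Fintype.sum_equiv e _ _ fun _ => Fintype.sum_equiv e _ _ fun _ => rfl

lemma tipP_blockDiagonal' {ι : Type*} [Fintype ι] [DecidableEq ι] {m : ι → Type*}
    [∀ i, Fintype (m i)] (Λ : Matrix (Σ i, m i) (Σ i, m i) ℝ)
    (B : ∀ i, Matrix (m i) (m i) (MvPolynomial (Fin n) ℝ)) :
    tipP Λ (blockDiagonal' B) = ∑ i, tipP (Λ.submatrix (Sigma.mk i) (Sigma.mk i)) (B i) := by
  simp only [tipP, Fintype.sum_sigma, submatrix_apply]
  refine Fintype.sum_congr _ _ fun i => Fintype.sum_congr _ _ fun a => ?_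
  rw [Fintype.sum_eq_single i fun j hj => ?_]
  · simp only [blockDiagonal'_apply_eq]
  · simp only [blockDiagonal'_apply_ne B _ _ hj.symm, mul_zero, Finset.sum_const_zero]

end TraceInnerProduct

section Words

variable {n t : ℕ} {q : Fin t → ℕ}
  (G : (i : Fin t) → Matrix (Fin (q i)) (Fin (q i)) (MvPolynomial (Fin n) ℝ))

lemma kronPow_blockDiagonal' (k : ℕ) :
    kronPow (blockDiagonal' G) k =
      (blockDiagonal' fun w : Fin k → Fin t => wordMat G w).submatrix
        (Equiv.arrowSigmaEquivSigmaPi (Fin k) fun i => Fin (q i))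
        (Equiv.arrowSigmaEquivSigmaPi (Fin k) fun i => Fin (q i)) := by
  set e := Equiv.arrowSigmaEquivSigmaPi (Fin k) fun i => Fin (q i)
  refine Matrix.ext fun a b => ?_
  obtain ⟨⟨w, x⟩, rfl⟩ := e.symm.surjective a
  obtain ⟨⟨v, y⟩, rfl⟩ := e.symm.surjective b
  rw [submatrix_apply, e.apply_symm_apply, e.apply_symm_apply, kronPow, of_apply]
  by_cases hwv : w = v
  · subst hwv
    rw [blockDiagonal'_apply_eq]
    exact Finset.prod_congr rfl fun i _ => blockDiagonal'_apply_eq G (w i) (x i) (y i)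
  · obtain ⟨i, hi⟩ := Function.ne_iff.mp hwv
    rw [blockDiagonal'_apply_ne _ _ _ hwv]
    exact Finset.prod_eq_zero (Finset.mem_univ i) (blockDiagonal'_apply_ne G (x i) (y i) hi)

lemma tipP_kronPow_blockDiagonal' {k : ℕ}
    (Λ : Matrix (Fin k → Σ i, Fin (q i)) (Fin k → Σ i, Fin (q i)) ℝ) :
    tipP Λ (kronPow (blockDiagonal' G) k) =
      ∑ w : Fin k → Fin t,
        tipP (Λ.submatrix (fun a i => ⟨w i, a i⟩) (fun a i => ⟨w i, a i⟩)) (wordMat G w) := by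
  rw [kronPow_blockDiagonal',
    ← tipP_submatrix_equiv _ _ (Equiv.arrowSigmaEquivSigmaPi (Fin k) fun i => Fin (q i)).symm]
  simp only [submatrix_submatrix, Equiv.self_comp_symm, submatrix_id_id, tipP_blockDiagonal']
  rfl

end Words

theorem Hset_blockDiagonal_words_general {n t : ℕ} {q : Fin t → ℕ}
    (G : (i : Fin t) → Matrix (Fin (q i)) (Fin (q i)) (MvPolynomial (Fin n) ℝ)) :
    Hset (Matrix.blockDiagonal' G) =
      { p | ∃ (m : ℕ) (lam0 : ℝ)
          (Γ : (k : ℕ) → (w : Fin k → Fin t) →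
            Matrix ((i : Fin k) → Fin (q (w i))) ((i : Fin k) → Fin (q (w i))) ℝ),
          0 ≤ lam0 ∧
          (∀ (k : ℕ), k ∈ Finset.Icc 1 m → ∀ w : Fin k → Fin t, (Γ k w).PosSemidef) ∧
          p = MvPolynomial.C lam0 +
            ∑ k ∈ Finset.Icc 1 m, ∑ w : Fin k → Fin t, tipP (Γ k w) (wordMat G w) } := by
  ext p
  constructor
  · rintro ⟨m, lam0, Λ, hlam0, hΛ, rfl⟩
    refine ⟨m, lam0, fun k w => (Λ k).submatrix (fun a i => ⟨w i, a i⟩) (fun a i => ⟨w i, a i⟩),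
      hlam0, fun k hk w => (hΛ k hk).submatrix _, ?_⟩
    simp only [tipP_kronPow_blockDiagonal']
  · rintro ⟨m, lam0, Γ, hlam0, hΓ, rfl⟩
    let e k := Equiv.arrowSigmaEquivSigmaPi (Fin k) fun i => Fin (q i)
    refine ⟨m, lam0, fun k => (blockDiagonal' (Γ k)).submatrix (e k) (e k), hlam0,
      fun k hk => (PosSemidef.blockDiagonal' (hΓ k hk)).submatrix _, ?_⟩
    simp only [e, kronPow_blockDiagonal', tipP_submatrix_equiv, tipP_blockDiagonal',
      blockDiagonal'_submatrix_sigmaMk]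

/-- For a block-diagonal linear polynomial matrix `G = diag(G₁,…,G_t)` (each `G_i` of
size `q_i` with affine entries, and `q = q₁ + ⋯ + q_t` realized by the sigma type
`Σ i, Fin (q i)`), the cone `H(G)` coincides with the set of polynomials
`λ₀ + ∑_w ⟨Γ_w, w(G(x))⟩`, the sum running over all words `w` of length `1,…,m`
in the letters `{1,…,t}`, with `λ₀ ≥ 0` and each `Γ_w` positive semidefinite of size
`d(w) = q_{w₁}⋯q_{w_k}`. -/
theorem Hset_blockDiagonal_words {n t : ℕ} {q : Fin t → ℕ}
    (G : (i : Fin t) → Matrix (Fin (q i)) (Fin (q i)) (MvPolynomial (Fin n) ℝ))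
    (hsym : ∀ i, (G i).IsSymm)
    (haff : ∀ i a b, ((G i) a b).totalDegree ≤ 1) :
    Hset (Matrix.blockDiagonal' G) =
      { p | ∃ (m : ℕ) (lam0 : ℝ)
          (Γ : (k : ℕ) → (w : Fin k → Fin t) →
            Matrix ((i : Fin k) → Fin (q (w i))) ((i : Fin k) → Fin (q (w i))) ℝ),
          0 ≤ lam0 ∧
          (∀ (k : ℕ), k ∈ Finset.Icc 1 m → ∀ w : Fin k → Fin t, (Γ k w).PosSemidef) ∧
          p = MvPolynomial.C lam0 +
            ∑ k ∈ Finset.Icc 1 m, ∑ w : Fin k → Fin t, tipP (Γ k w) (wordMat G w) } :=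
  Hset_blockDiagonal_words_general G

end
end
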